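/- For every three-qubit pure state ψ, the 3-tangle τ_ABS := 4·det ρ_A − C(ρ_AB)² − C(ρ_AS)² satisfies τ_ABS = C_a(ρ_AB)² + C_a(ρ_AS)² − 4·det ρ_A; that is, the excess of the squared CKW concurrence bound over the sum of squared concurrences equals the excess of the sum of squared concurrences of assistance over the squared concurrence C_{A(BS)}² = 4·det ρ_A. -/

import Mathlib

open Matrix Complex Kronecker Finset
open scoped ComplexOrder

noncomputable section

abbrev TwoQubitMat := Matrix (Fin 2 × Fin 2) (Fin 2 × Fin 2) ℂ

def sigmaY : Matrix (Fin 2) (Fin 2) ℂ := !![0, -Complex.I; Complex.I, 0]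

def spinFlip (ρ : TwoQubitMat) : TwoQubitMat :=
  (sigmaY ⊗ₖ sigmaY) * ρ.map (starRingEnd ℂ) * (sigmaY ⊗ₖ sigmaY)

def matSqrt {m : Type*} [Fintype m] [DecidableEq m] (M : Matrix m m ℂ) : Matrix m m ℂ :=
  open scoped Classical in
  if h : M.PosSemidef then
    h.1.eigenvectorUnitary.1 * diagonal ((↑) ∘ Real.sqrt ∘ h.1.eigenvalues) *
      (star h.1.eigenvectorUnitary : Matrix m m ℂ) else 0

def Rmat (ρ : TwoQubitMat) : TwoQubitMat :=
  matSqrt (matSqrt ρ * spinFlip ρ * matSqrt ρ)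

def CoA (ρ : TwoQubitMat) : ℝ := (Rmat ρ).trace.re

def lmin2 (M : Matrix (Fin 2) (Fin 2) ℂ) : ℝ :=
  if h : M.IsHermitian then min (h.eigenvalues 0) (h.eigenvalues 1) else 0

def maxEig4 (M : TwoQubitMat) : ℝ :=
  if h : M.IsHermitian then Finset.univ.sup' Finset.univ_nonempty h.eigenvalues else 0

def Conc (ρ : TwoQubitMat) : ℝ := max 0 (2 * maxEig4 (Rmat ρ) - (Rmat ρ).trace.re)

def eigMultiset (M : TwoQubitMat) : Multiset ℝ :=
  if h : M.IsHermitian then Finset.univ.val.map h.eigenvalues else 0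

def rhoAB (ψ : Fin 2 → Fin 2 → Fin 2 → ℂ) : TwoQubitMat :=
  fun p q => ∑ l, ψ p.1 p.2 l * (starRingEnd ℂ) (ψ q.1 q.2 l)

def rhoAS (ψ : Fin 2 → Fin 2 → Fin 2 → ℂ) : TwoQubitMat :=
  fun p q => ∑ j, ψ p.1 j p.2 * (starRingEnd ℂ) (ψ q.1 j q.2)

def rhoA (ψ : Fin 2 → Fin 2 → Fin 2 → ℂ) : Matrix (Fin 2) (Fin 2) ℂ :=
  fun i i' => ∑ j, ∑ l, ψ i j l * (starRingEnd ℂ) (ψ i' j l)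

/-!
Both `ρ_AB` and `ρ_AS` have rank at most two, since the traced-out party is a single
qubit. Hence `R(ρ)` has at most two nonzero eigenvalues `λ₁ ≥ λ₂`, so `C = λ₁ - λ₂`,
`C_a = λ₁ + λ₂` and `C² + C_a² = 2 (λ₁² + λ₂²) = 2 Tr R² = 2 Tr (ρ ρ̃)`. The theorem then
reduces to the polynomial identity `Tr (ρ_AB ρ̃_AB) + Tr (ρ_AS ρ̃_AS) = 4 det ρ_A` in the
amplitudes of `ψ`.
-/

section MatSqrt

variable {m : Type*} [Fintype m] [DecidableEq m]

lemma matSqrt_eq_conjStarAlgAut {M : Matrix m m ℂ} (h : M.PosSemidef) :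
    matSqrt M = Unitary.conjStarAlgAut ℂ _ h.1.eigenvectorUnitary
      (diagonal fun i => (√(h.1.eigenvalues i) : ℂ)) := by
  rw [matSqrt, dif_pos h, Unitary.conjStarAlgAut_apply]
  rfl

lemma posSemidef_matSqrt (M : Matrix m m ℂ) : (matSqrt M).PosSemidef := by
  by_cases h : M.PosSemidef
  · rw [matSqrt_eq_conjStarAlgAut h, Unitary.conjStarAlgAut_apply, star_eq_conjTranspose]
    exact (PosSemidef.diagonal fun i => by simp [Real.sqrt_nonneg]).mul_mul_conjTranspose_same _
  · rw [matSqrt, dif_neg h]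
    exact PosSemidef.zero

lemma matSqrt_mul_self {M : Matrix m m ℂ} (h : M.PosSemidef) : matSqrt M * matSqrt M = M := by
  conv_rhs => rw [h.1.spectral_theorem]
  rw [matSqrt_eq_conjStarAlgAut h, ← map_mul, diagonal_mul_diagonal]
  congr 2
  funext i
  simp [← Complex.ofReal_mul, Real.mul_self_sqrt (h.eigenvalues_nonneg i)]

end MatSqrt

section Spectrum

variable {n : Type*} [Fintype n] [DecidableEq n]

lemma Matrix.trace_conjStarAlgAut (U : unitary (Matrix n n ℂ)) (X : Matrix n n ℂ) :
    (Unitary.conjStarAlgAut ℂ _ U X).trace = X.trace := by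
  rw [Unitary.conjStarAlgAut_apply, trace_mul_cycle, Unitary.coe_star_mul_self, one_mul]

lemma Matrix.IsHermitian.trace_mul_self {A : Matrix n n ℂ} (hA : A.IsHermitian) :
    (A * A).trace = ∑ i, (hA.eigenvalues i : ℂ) ^ 2 := by
  conv_lhs => rw [hA.spectral_theorem, ← map_mul, trace_conjStarAlgAut, diagonal_mul_diagonal,
    trace_diagonal]
  simp [sq]

end Spectrum

lemma Finset.sq_sum_eq_sum_sq_of_card_le_one {ι R : Type*} [CommSemiring R] {s : Finset ι}
    (hs : #s ≤ 1) (f : ι → R) : (∑ i ∈ s, f i) ^ 2 = ∑ i ∈ s, f i ^ 2 := by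
  rcases Nat.le_one_iff_eq_zero_or_eq_one.mp hs with h | h
  · simp [Finset.card_eq_zero.mp h]
  · obtain ⟨a, rfl⟩ := Finset.card_eq_one.mp h
    simp

section SupportCardLeTwo

variable {n : Type*} [Fintype n] [Nonempty n] {e : n → ℝ}

lemma sum_le_two_mul_sup' (he : 0 ≤ e) (hsupp : Fintype.card {i // e i ≠ 0} ≤ 2) :
    ∑ i, e i ≤ 2 * univ.sup' univ_nonempty e := by
  classical
  rw [Fintype.card_subtype] at hsupp
  have hmax_nonneg : 0 ≤ univ.sup' univ_nonempty e :=
    (he (Classical.arbitrary n)).trans (le_sup' e (mem_univ _))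
  calc ∑ i, e i = ∑ i ∈ univ.filter (e · ≠ 0), e i := (sum_filter_ne_zero _).symm
    _ ≤ #(univ.filter (e · ≠ 0)) • univ.sup' univ_nonempty e :=
      sum_le_card_nsmul _ _ _ fun i _ => le_sup' e (mem_univ i)
    _ ≤ 2 • univ.sup' univ_nonempty e := nsmul_le_nsmul_left hmax_nonneg hsupp
    _ = 2 * univ.sup' univ_nonempty e := two_nsmul _ |>.trans (two_mul _).symm

lemma sq_two_mul_sup'_sub_sum_add_sq_sum (he : 0 ≤ e)
    (hsupp : Fintype.card {i // e i ≠ 0} ≤ 2) :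
    (2 * univ.sup' univ_nonempty e - ∑ i, e i) ^ 2 + (∑ i, e i) ^ 2 = 2 * ∑ i, e i ^ 2 := by
  classical
  obtain ⟨i₀, -, hi₀⟩ := exists_mem_eq_sup' univ_nonempty e
  have hmax : ∀ i, e i ≤ e i₀ := fun i => hi₀ ▸ le_sup' e (mem_univ i)
  set t := (univ.erase i₀).filter (e · ≠ 0)
  have ht : #t ≤ 1 := by
    rw [Fintype.card_subtype] at hsupp
    by_cases h0 : e i₀ = 0
    · have hzero : ∀ i, e i = 0 := fun i => le_antisymm (h0 ▸ hmax i) (he i)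
      simp [t, hzero]
    · rw [show t = (univ.filter (e · ≠ 0)).erase i₀ from filter_erase ..,
        card_erase_of_mem (by simpa using h0)]
      omega
  have hsum : ∑ i, e i = e i₀ + ∑ i ∈ t, e i := by
    rw [← add_sum_erase _ _ (mem_univ i₀), sum_filter_of_ne fun _ _ h => h]
  have hsq : ∑ i, e i ^ 2 = e i₀ ^ 2 + (∑ i ∈ t, e i) ^ 2 := by
    rw [← add_sum_erase _ _ (mem_univ i₀), sq_sum_eq_sum_sq_of_card_le_one ht,
      sum_filter_of_ne fun _ _ h => by simpa using h]
  rw [hi₀, hsum, hsq]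
  ring

end SupportCardLeTwo

lemma sigmaY_isHermitian : sigmaY.IsHermitian := by
  ext i j
  fin_cases i <;> fin_cases j <;> simp [sigmaY]

lemma spinFlip_eq_mul_mul_conjTranspose (ρ : TwoQubitMat) :
    spinFlip ρ = (sigmaY ⊗ₖ sigmaY) * ρᴴᵀ * (sigmaY ⊗ₖ sigmaY)ᴴ := by
  rw [conjTranspose_kronecker, sigmaY_isHermitian.eq]
  rfl

lemma Matrix.PosSemidef.spinFlip {ρ : TwoQubitMat} (hρ : ρ.PosSemidef) :
    (spinFlip ρ).PosSemidef := by
  rw [spinFlip_eq_mul_mul_conjTranspose, hρ.1.eq]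
  exact hρ.transpose.mul_mul_conjTranspose_same _

lemma rank_spinFlip_le (ρ : TwoQubitMat) : (spinFlip ρ).rank ≤ ρ.rank :=
  calc (spinFlip ρ).rank
      ≤ ((sigmaY ⊗ₖ sigmaY) * ρᴴᵀ).rank := by
        rw [spinFlip_eq_mul_mul_conjTranspose]; exact rank_mul_le_left _ _
    _ ≤ ρᴴᵀ.rank := rank_mul_le_right _ _
    _ = ρ.rank := by rw [rank_transpose, rank_conjTranspose]

lemma posSemidef_Rmat (ρ : TwoQubitMat) : (Rmat ρ).PosSemidef := posSemidef_matSqrt _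

lemma Rmat_mul_self {ρ : TwoQubitMat} (hρ : ρ.PosSemidef) :
    Rmat ρ * Rmat ρ = matSqrt ρ * spinFlip ρ * matSqrt ρ := by
  apply matSqrt_mul_self
  simpa [(posSemidef_matSqrt ρ).1.eq] using
    hρ.spinFlip.conjTranspose_mul_mul_same (matSqrt ρ)

lemma trace_Rmat_mul_self {ρ : TwoQubitMat} (hρ : ρ.PosSemidef) :
    (Rmat ρ * Rmat ρ).trace = (ρ * spinFlip ρ).trace := by
  rw [Rmat_mul_self hρ, trace_mul_cycle, matSqrt_mul_self hρ]

lemma rank_Rmat_le {ρ : TwoQubitMat} (hρ : ρ.PosSemidef) : (Rmat ρ).rank ≤ ρ.rank :=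
  calc (Rmat ρ).rank
      = (matSqrt ρ * spinFlip ρ * matSqrt ρ).rank := by
        rw [← Rmat_mul_self hρ, ← rank_conjTranspose_mul_self, (posSemidef_Rmat ρ).1.eq]
    _ ≤ (matSqrt ρ * spinFlip ρ).rank := rank_mul_le_left _ _
    _ ≤ (spinFlip ρ).rank := rank_mul_le_right _ _
    _ ≤ ρ.rank := rank_spinFlip_le ρ

lemma Conc_sq_add_CoA_sq {ρ : TwoQubitMat} (hρ : ρ.PosSemidef) (hrk : ρ.rank ≤ 2) :
    Conc ρ ^ 2 + CoA ρ ^ 2 = 2 * (ρ * spinFlip ρ).trace.re := by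
  have hR := posSemidef_Rmat ρ
  have hsupp : Fintype.card {i // hR.1.eigenvalues i ≠ 0} ≤ 2 :=
    hR.1.rank_eq_card_non_zero_eigs ▸ (rank_Rmat_le hρ).trans hrk
  have he := hR.eigenvalues_nonneg
  have htrace : (Rmat ρ).trace.re = ∑ i, hR.1.eigenvalues i := by
    simp [hR.1.trace_eq_sum_eigenvalues]
  have htrace_sq : (ρ * spinFlip ρ).trace.re = ∑ i, hR.1.eigenvalues i ^ 2 := by
    rw [← trace_Rmat_mul_self hρ, hR.1.trace_mul_self]
    norm_cast
  rw [Conc, CoA, maxEig4, dif_pos hR.1, htrace, htrace_sq,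
    max_eq_right (sub_nonneg.mpr (sum_le_two_mul_sup' he hsupp)),
    sq_two_mul_sup'_sub_sum_add_sq_sum he hsupp]

section ThreeQubit

variable (ψ : Fin 2 → Fin 2 → Fin 2 → ℂ)

lemma rhoAS_eq_rhoAB_swap : rhoAS ψ = rhoAB fun i j l => ψ i l j := rfl

lemma rhoAB_eq_mul_conjTranspose :
    rhoAB ψ = of (fun p l => ψ p.1 p.2 l) * (of fun p l => ψ p.1 p.2 l)ᴴ := by
  ext p q
  simp [rhoAB, mul_apply]

lemma posSemidef_rhoAB : (rhoAB ψ).PosSemidef := by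
  rw [rhoAB_eq_mul_conjTranspose]
  exact posSemidef_self_mul_conjTranspose _

lemma rank_rhoAB_le : (rhoAB ψ).rank ≤ 2 := by
  rw [rhoAB_eq_mul_conjTranspose, rank_self_mul_conjTranspose]
  simpa using rank_le_card_width (of fun (p : Fin 2 × Fin 2) l => ψ p.1 p.2 l)

lemma spinFlip_apply (ρ : TwoQubitMat) (p q : Fin 2 × Fin 2) :
    spinFlip ρ p q = (-1) ^ (p.1 + p.2 + q.1 + q.2 : ℕ) *
      starRingEnd ℂ (ρ (p.1.rev, p.2.rev) (q.1.rev, q.2.rev)) := by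
  obtain ⟨a, b⟩ := p
  obtain ⟨c, d⟩ := q
  fin_cases a <;> fin_cases b <;> fin_cases c <;> fin_cases d <;>
    simp [spinFlip, mul_apply, sigmaY, Fintype.sum_prod_type, Fin.sum_univ_two, pow_succ]

lemma trace_mul_spinFlip_rhoAB_add_rhoAS :
    (rhoAB ψ * spinFlip (rhoAB ψ)).trace + (rhoAS ψ * spinFlip (rhoAS ψ)).trace =
      4 * (rhoA ψ).det := by
  simp only [trace, diag_apply, mul_apply, spinFlip_apply, rhoAB, rhoAS, rhoA, det_fin_two,
    Fintype.sum_prod_type, Fin.sum_univ_two, Fin.rev_zero, Fin.reduceLast, Fin.reduceRev,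
    Fin.val_zero, Fin.val_one, Nat.reduceAdd, pow_succ, pow_zero, map_add, map_mul,
    Complex.conj_conj]
  ring

end ThreeQubit

theorem three_tangle_dual_general (ψ : Fin 2 → Fin 2 → Fin 2 → ℂ) :
    4 * (rhoA ψ).det.re - Conc (rhoAB ψ) ^ 2 - Conc (rhoAS ψ) ^ 2 =
      CoA (rhoAB ψ) ^ 2 + CoA (rhoAS ψ) ^ 2 - 4 * (rhoA ψ).det.re := by
  have hAB := Conc_sq_add_CoA_sq (posSemidef_rhoAB ψ) (rank_rhoAB_le ψ)
  have hAS := Conc_sq_add_CoA_sq (posSemidef_rhoAB fun i j l => ψ i l j) (rank_rhoAB_le _)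
  rw [← rhoAS_eq_rhoAB_swap] at hAS
  have hdet := congrArg Complex.re (trace_mul_spinFlip_rhoAB_add_rhoAS ψ)
  simp only [Complex.add_re, Complex.mul_re, Complex.re_ofNat, Complex.im_ofNat, zero_mul, sub_zero]
    at hdet
  linarith

theorem three_tangle_dual (ψ : Fin 2 → Fin 2 → Fin 2 → ℂ)
    (hψ : ∑ i, ∑ j, ∑ l, Complex.normSq (ψ i j l) = 1) :
    4 * (rhoA ψ).det.re - Conc (rhoAB ψ) ^ 2 - Conc (rhoAS ψ) ^ 2 =
      CoA (rhoAB ψ) ^ 2 + CoA (rhoAS ψ) ^ 2 - 4 * (rhoA ψ).det.re :=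
  three_tangle_dual_general ψ
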